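/- Let n ≥ 2, κ > 0, ε > 0 and set a_1 = 6/(n−1), a_2 = −2. Define u : ℝ^n → ℝ^n by u(x) = (1/2 + G) e_n + (G^2 − 1/4)[ Σ_{i=1}^{n−1} (a_1 x_i/δ) e_i + G (4κ a_1 |x'|^2/δ + a_2) e_n ], where δ = δ(x') and G = G(x). Then u is divergence free: div u(x) = 0 at every point x ∈ ℝ^n. -/

import Mathlib

noncomputable section

/-- `δ(x') = ε + 2κ|x'|²` on `ℝ^{n-1}`. -/
def del (d : ℕ) (κ ε : ℝ) (x' : EuclideanSpace ℝ (Fin d)) : ℝ :=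
  ε + 2 * κ * ‖x'‖ ^ 2

/-- `G(x) = x_n / δ(x')`, for `x = (x', x_n) ∈ ℝ^{n-1} × ℝ`. -/
def Gf (d : ℕ) (κ ε : ℝ) (x : EuclideanSpace ℝ (Fin d) × ℝ) : ℝ :=
  x.2 / del d κ ε x.1

/-- The divergence `div u = ∑_{i=1}^{n-1} ∂_i u_i + ∂_n u_n` of a vector field
`u : ℝ^{n-1} × ℝ → ℝ^{n-1} × ℝ`. -/
def divg {d : ℕ} (u : EuclideanSpace ℝ (Fin d) × ℝ → EuclideanSpace ℝ (Fin d) × ℝ)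
    (x : EuclideanSpace ℝ (Fin d) × ℝ) : ℝ :=
  (∑ i : Fin d, (fderiv ℝ u x (EuclideanSpace.single i 1, 0)).1 i)
    + (fderiv ℝ u x (0, 1)).2

/-- The auxiliary velocity field
`u(x) = (1/2 + G) e_n + (G² − 1/4)[ ∑_{i=1}^{n−1} (a₁ x_i/δ) e_i
+ G (4κ a₁ |x'|²/δ + a₂) e_n ]`. -/
def uN (d : ℕ) (κ ε a1 a2 : ℝ) (x : EuclideanSpace ℝ (Fin d) × ℝ) :
    EuclideanSpace ℝ (Fin d) × ℝ :=
  ((Gf d κ ε x ^ 2 - 1 / 4) •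
      ∑ i : Fin d, (a1 * x.1 i / del d κ ε x.1) • EuclideanSpace.single i (1 : ℝ),
    (1 / 2 + Gf d κ ε x)
      + (Gf d κ ε x ^ 2 - 1 / 4) *
          (Gf d κ ε x * (4 * κ * a1 * ‖x.1‖ ^ 2 / del d κ ε x.1 + a2)))

abbrev ES (d : ℕ) := EuclideanSpace ℝ (Fin d) × ℝ

def PP (d : ℕ) (j : Fin d) : ES d →L[ℝ] ℝ :=
  (EuclideanSpace.proj j).comp (ContinuousLinearMap.fst ℝ _ _)

@[simp] lemma PP_apply (d : ℕ) (j : Fin d) (v : ES d) : PP d j v = v.1 j := rfl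

lemma hasFDerivAt_div'' {E : Type*} [NormedAddCommGroup E] [NormedSpace ℝ E]
    {c d : E → ℝ} {c' d' : E →L[ℝ] ℝ} {x : E}
    (hc : HasFDerivAt c c' x) (hd : HasFDerivAt d d' x) (hx : d x ≠ 0) :
    HasFDerivAt (fun y => c y / d y) (((d x) ^ 2)⁻¹ • (d x • c' - c x • d')) x := by
  have hinv : HasFDerivAt (fun y => (d y)⁻¹) ((-(d x ^ 2)⁻¹) • d') x :=
    (hasDerivAt_inv hx).comp_hasFDerivAt x hd
  have h := hc.mul hinv
  simp only [div_eq_mul_inv]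
  refine h.congr_fderiv ?_
  ext v
  simp only [ContinuousLinearMap.smul_apply, ContinuousLinearMap.sub_apply,
    ContinuousLinearMap.add_apply, smul_eq_mul]
  field_simp
  ring

lemma hasFDerivAt_sq'' {E : Type*} [NormedAddCommGroup E] [NormedSpace ℝ E]
    {f : E → ℝ} {f' : E →L[ℝ] ℝ} {x : E} (hf : HasFDerivAt f f' x) :
    HasFDerivAt (fun y => f y ^ 2) (f x • f' + f x • f') x := by
  simp only [pow_two]; exact hf.mul hf

@[simp] lemma euclid_zero_apply (d : ℕ) (k : Fin d) :
    (0 : EuclideanSpace ℝ (Fin d)) k = 0 := rfl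

@[simp] lemma euclid_sum_single_apply (d : ℕ) (c : Fin d → ℝ) (k : Fin d) :
    (∑ i : Fin d, c i • EuclideanSpace.single i (1 : ℝ)) k = c k := by
  rw [WithLp.ofLp_sum, Finset.sum_apply]
  simp [EuclideanSpace.single_apply]

set_option maxHeartbeats 2000000 in
theorem aux (d : ℕ) (κ ε a1 a2 : ℝ) (hκ : 0 < κ) (hε : 0 < ε)
    (ha1 : a1 * d = 6) (ha2 : a2 = -2) (x : ES d) :
    divg (uN d κ ε a1 a2) x = 0 := by
  have hδ0 : ε + 2 * κ * ‖x.1‖ ^ 2 ≠ 0 := by positivity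
  have hP : ∀ j : Fin d, HasFDerivAt (fun y : ES d => y.1 j) (PP d j) x :=
    fun j => (PP d j).hasFDerivAt
  have hsnd : HasFDerivAt (fun y : ES d => y.2)
      (ContinuousLinearMap.snd ℝ (EuclideanSpace ℝ (Fin d)) ℝ) x :=
    (ContinuousLinearMap.snd ℝ (EuclideanSpace ℝ (Fin d)) ℝ).hasFDerivAt
  have er2 : (fun y : ES d => ‖y.1‖ ^ 2) = fun y : ES d => ∑ j, y.1 j * y.1 j := by
    funext y
    rw [EuclideanSpace.norm_eq, Real.sq_sqrt (by positivity)]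
    simp [sq]
  have hr2 : HasFDerivAt (fun y : ES d => ‖y.1‖ ^ 2)
      (∑ j : Fin d, (x.1 j • PP d j + x.1 j • PP d j)) x := by
    rw [er2]; exact HasFDerivAt.fun_sum fun j _ => (hP j).mul (hP j)
  have hdl := (hr2.const_mul (2 * κ)).const_add ε
  have hG := hasFDerivAt_div'' hsnd hdl hδ0
  have hGsq := hasFDerivAt_sq'' hG
  have hc := hGsq.sub_const (1 / 4 : ℝ)
  have hS := HasFDerivAt.fun_sum
    (fun i (_ : i ∈ Finset.univ) =>
      (hasFDerivAt_div'' ((hP i).const_mul a1) hdl hδ0).smul_const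
        (EuclideanSpace.single i (1 : ℝ)))
  have hF1 := hc.smul hS
  have hq := (hasFDerivAt_div'' (hr2.const_mul (4 * κ * a1)) hdl hδ0).add_const a2
  have hF2 := (hG.const_add (1 / 2 : ℝ)).add (hc.mul (hG.mul hq))
  have hu : HasFDerivAt (uN d κ ε a1 a2) _ x := hF1.prodMk hF2
  unfold divg
  rw [hu.fderiv]
  simp only [ContinuousLinearMap.prod_apply, ContinuousLinearMap.add_apply,
    ContinuousLinearMap.smul_apply, ContinuousLinearMap.sub_apply,
    ContinuousLinearMap.smulRight_apply, ContinuousLinearMap.coe_snd',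
    ContinuousLinearMap.sum_apply, PP_apply, smul_eq_mul, EuclideanSpace.single_apply,
    Finset.sum_ite_eq, Finset.sum_ite_eq', Finset.mem_univ, if_true, mul_zero, zero_mul,
    mul_one, one_mul, mul_ite, ite_mul, add_zero, zero_add,
    PiLp.add_apply, PiLp.smul_apply, Finset.sum_apply, Pi.mul_apply,
    euclid_zero_apply, euclid_sum_single_apply, Finset.sum_add_distrib, sub_zero, zero_sub,
    Finset.sum_const_zero, mul_zero, add_zero, zero_add]
  have hsum : (∑ j : Fin d, x.1 j * x.1 j) = ‖x.1‖ ^ 2 := (congrFun er2 x).symm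
  set r := ‖x.1‖ ^ 2 with hrdef
  set D := ε + 2 * κ * r with hDdef
  have esum : ∀ A B : ℝ, (∑ i : Fin d, (A + B * (x.1 i * x.1 i))) = d * A + B * r := by
    intro A B
    rw [Finset.sum_add_distrib, Finset.sum_const, ← Finset.mul_sum, hsum, Finset.card_univ,
      Fintype.card_fin, nsmul_eq_mul]
  have e1 : (∑ x_1 : Fin d, ((x.2 / D) ^ 2 - 1 / 4) *
        ((D ^ 2)⁻¹ * (D * a1 - a1 * x.1 x_1 * (2 * κ * (x.1 x_1 + x.1 x_1))))) =
      (d : ℝ) * (((x.2 / D) ^ 2 - 1 / 4) * ((D ^ 2)⁻¹ * (D * a1)))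
        + (-(((x.2 / D) ^ 2 - 1 / 4) * ((D ^ 2)⁻¹ * (4 * κ * a1)))) * r := by
    rw [← esum]; exact Finset.sum_congr rfl fun i _ => by ring
  have e2 : (∑ x_1 : Fin d,
        (x.2 / D * ((D ^ 2)⁻¹ * -(x.2 * (2 * κ * (x.1 x_1 + x.1 x_1)))) +
            x.2 / D * ((D ^ 2)⁻¹ * -(x.2 * (2 * κ * (x.1 x_1 + x.1 x_1))))) *
          (a1 * x.1 x_1 / D)) =
      (d : ℝ) * 0 + (-(8 * κ * a1 * (x.2 / D) * x.2 * (D ^ 2)⁻¹ / D)) * r := by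
    rw [← esum]; exact Finset.sum_congr rfl fun i _ => by ring
  rw [e1, e2]
  have hd0 : (d : ℝ) ≠ 0 := by
    intro h; rw [h, mul_zero] at ha1; norm_num at ha1
  have ha1' : a1 = 6 / (d : ℝ) := by field_simp; linarith [ha1]
  subst ha2
  rw [ha1']
  field_simp
  ring

/-- With `a₁ = 6/(n−1)` and `a₂ = −2`, the auxiliary field `uN` is divergence free
on all of `ℝⁿ`. -/
theorem divergence_free_normal_field
    (n : ℕ) (hn : 2 ≤ n) (κ ε : ℝ) (hκ : 0 < κ) (hε : 0 < ε)
    (a1 a2 : ℝ) (ha1 : a1 = 6 / ((n : ℝ) - 1)) (ha2 : a2 = -2)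
    (x : EuclideanSpace ℝ (Fin (n - 1)) × ℝ) :
    divg (uN (n - 1) κ ε a1 a2) x = 0 := by
  apply aux _ κ ε a1 a2 hκ hε _ ha2 x
  have h2 : (2 : ℝ) ≤ (n : ℝ) := by exact_mod_cast hn
  have h1 : ((n - 1 : ℕ) : ℝ) = (n : ℝ) - 1 := by
    have h : (1 : ℕ) ≤ n := le_trans one_le_two hn
    push_cast [Nat.cast_sub h]
    ring
  have hne : (n : ℝ) - 1 ≠ 0 := by linarith
  rw [h1, ha1]
  field_simp
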